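/- Let n ≥ 2 and let σ ≤ τ in P_n^* be wire diagrams with S(σ) = S(τ). Then the map D ↦ π(D) is an order isomorphism from the closed interval [σ, τ] in P_n^* onto the closed interval [π(σ), π(τ)] in the Bruhat order on the symmetric group S_n. -/

import Mathlib

open Equiv Finset

/-- A candidate wire diagram: a permutation of the `2 n` endpoint positions. -/
abbrev WDperm (n : ℕ) := Equiv.Perm (Fin (2 * n))

/-- `σ` is a wire diagram on `n` wires: a fixed-point-free involution of the `2 n` positions. -/
def IsWD {n : ℕ} (σ : WDperm n) : Prop := (∀ x, σ (σ x) = x) ∧ ∀ x, σ x ≠ x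

instance IsWD.decPred {n : ℕ} : DecidablePred (@IsWD n) := fun σ => by
  unfold IsWD; infer_instance

/-- Positions `a < c` are first endpoints of a pair of crossing wires `{a, σ a}`, `{c, σ c}`,
i.e. `a < c < σ a < σ c`. -/
def IsCrossing {n : ℕ} (σ : WDperm n) (a c : Fin (2 * n)) : Prop :=
  a < c ∧ c < σ a ∧ σ a < σ c

instance IsCrossing.dec {n : ℕ} (σ : WDperm n) (a c : Fin (2 * n)) :
    Decidable (IsCrossing σ a c) := by unfold IsCrossing; infer_instance

/-- The number `c(σ)` of crossings of `σ`. -/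
def ncross {n : ℕ} (σ : WDperm n) : ℕ :=
  (Finset.univ.filter (fun p : Fin (2 * n) × Fin (2 * n) => IsCrossing σ p.1 p.2)).card

/-- The nesting uncrossing of the crossing `{a, σ a}, {c, σ c}` (with `a < c < σ a < σ c`):
replace the pairs `{a,b},{c,d}` by `{a,d},{b,c}` where `b = σ a`, `d = σ c`. -/
def nestU {n : ℕ} (σ : WDperm n) (a c : Fin (2 * n)) : WDperm n :=
  Equiv.swap (σ a) (σ c) * σ * Equiv.swap (σ a) (σ c)

/-- The disjoint uncrossing: replace the pairs `{a,b},{c,d}` by `{a,c},{b,d}`. -/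
def disjU {n : ℕ} (σ : WDperm n) (a c : Fin (2 * n)) : WDperm n :=
  Equiv.swap (σ a) c * σ * Equiv.swap (σ a) c

/-- `τ` is obtained from `σ` by a nesting uncrossing of some crossing of `σ`. -/
def IsNestStep {n : ℕ} (σ τ : WDperm n) : Prop := ∃ a c, IsCrossing σ a c ∧ τ = nestU σ a c

/-- `τ` is obtained from `σ` by a disjoint uncrossing of some crossing of `σ`. -/
def IsDisjStep {n : ℕ} (σ τ : WDperm n) : Prop := ∃ a c, IsCrossing σ a c ∧ τ = disjU σ a c

/-- `τ` is obtained from `σ` by an uncrossing step that decreases the crossing number by one. -/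
def UncCov {n : ℕ} (σ τ : WDperm n) : Prop :=
  (IsNestStep σ τ ∨ IsDisjStep σ τ) ∧ ncross τ + 1 = ncross σ

/-- The dual uncrossing poset `P_n^*`: wire diagrams together with a top element `none = 1̂`
(the adjoined element `0̂` of `P_n`). -/
abbrev PStar (n : ℕ) := Option {σ : WDperm n // IsWD σ}

/-- The covering relation of `P_n^*`. -/
def Cov {n : ℕ} : PStar n → PStar n → Prop
  | some σ, some τ => UncCov σ.1 τ.1
  | some σ, none => ncross σ.1 = 0
  | none, _ => False

/-- The partial order of `P_n^*`: reflexive-transitive closure of the covering relation. -/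
def ple {n : ℕ} : PStar n → PStar n → Prop := Relation.ReflTransGen Cov

/-- The (0-indexed) name `w(σ)(x)` of the wire through position `x`: the number of wires whose
first endpoint is strictly smaller than the first endpoint of the wire through `x`. -/
def word {n : ℕ} (σ : WDperm n) (x : Fin (2 * n)) : ℕ :=
  (Finset.univ.filter (fun a : Fin (2 * n) => a < σ a ∧ a < min x (σ x))).card

/-- The start set `S(σ)`: the set of first endpoints of wires of `σ`. -/
def startSet {n : ℕ} (σ : WDperm n) : Finset (Fin (2 * n)) :=
  Finset.univ.filter (fun a => a < σ a)

/-- The noncrossing pair set `N(σ)` (on 0-indexed wire names): `(i, j)` with `i < j` for each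
nested pair of wires `i < j`, and `(j, i)` for each disjoint pair of wires `i < j`. -/
def NPairs {n : ℕ} (σ : WDperm n) : Set (ℕ × ℕ) :=
  {p | ∃ a c : Fin (2 * n), a < σ a ∧ c < σ c ∧ a < c ∧
        ((σ c < σ a ∧ p = (word σ a, word σ c)) ∨ (σ a < c ∧ p = (word σ c, word σ a)))}

/-- Lexicographic comparison of finsets via their increasing enumerations. -/
def finsetLexLE {m : ℕ} (A B : Finset (Fin m)) : Prop :=
  A = B ∨ List.Lex (· < ·) (A.sort (· ≤ ·)) (B.sort (· ≤ ·))

/-- Labels of the edge labeling: ordered pairs of (0-indexed) wire names, and a label `L`. -/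
inductive Lbl where
  | pair : ℕ → ℕ → Lbl
  | L : Lbl
deriving DecidableEq

/-- The total order `<λ` on labels. -/
def lblLT : Lbl → Lbl → Prop
  | .pair i j, .pair i' j' =>
      if i < j then (if i' < j' then i < i' ∨ (i = i' ∧ j < j') else True)
      else (if i' < j' then False else (j' < j ∨ (j = j' ∧ i' < i)))
  | .pair i j, .L => i < j
  | .L, .pair r s => s < r
  | .L, .L => False

/-- `≤λ` on labels. -/
def lblLE (p q : Lbl) : Prop := p = q ∨ lblLT p q

/-- The sorted list of positions where `σ` and `τ` differ. -/
def diffList {n : ℕ} (σ τ : WDperm n) : List (Fin (2 * n)) :=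
  (Finset.univ.filter (fun x => σ x ≠ τ x)).sort (· ≤ ·)

/-- The edge labeling `λ` of `P_n^*`: an uncrossing of the crossing formed by wires `k < m`
of the lower diagram gets label `(k, m)` if it is the nesting uncrossing and `(m, k)` if it is
the disjoint uncrossing; covers of the top element `1̂ = none` get the label `L`. -/
def lbl {n : ℕ} : PStar n → PStar n → Lbl
  | some σ, some τ =>
      match (diffList σ.1 τ.1)[0]?, (diffList σ.1 τ.1)[1]? with
      | some a, some c =>
          if τ.1 a = σ.1 c then Lbl.pair (word σ.1 a) (word σ.1 c)
          else Lbl.pair (word σ.1 c) (word σ.1 a)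
      | _, _ => Lbl.L
  | _, _ => Lbl.L

/-- `c` is a saturated chain from `u` to `v` in `P_n^*`. -/
def SatChain {n : ℕ} (c : List (PStar n)) (u v : PStar n) : Prop :=
  c.Chain' Cov ∧ c.head? = some u ∧ c.getLast? = some v

/-- The label sequence of a saturated chain. -/
def chainLabels {n : ℕ} (c : List (PStar n)) : List Lbl := c.zipWith lbl c.tail

/-- Lexicographic order on pairs of labels. -/
def pairLexLT (p q : Lbl × Lbl) : Prop := lblLT p.1 q.1 ∨ (p.1 = q.1 ∧ lblLT p.2 q.2)

/-- `x ⋖ y ⋖ z` is a topological ascent: its label pair is lexicographically strictly smaller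
than the label pair of every other saturated chain from `x` to `z`. -/
def TopAscent {n : ℕ} (x y z : PStar n) : Prop :=
  Cov x y ∧ Cov y z ∧ ∀ y' : PStar n, Cov x y' → Cov y' z → y' ≠ y →
    pairLexLT (lbl x y, lbl y z) (lbl x y', lbl y' z)

/-- `x ⋖ y ⋖ z` is a topological descent: a length-two chain that is not a topological ascent. -/
def TopDescent {n : ℕ} (x y z : PStar n) : Prop := Cov x y ∧ Cov y z ∧ ¬ TopAscent x y z

/-- Every length-two subchain of `c` is a topological ascent. -/
def AllTopAscents {n : ℕ} (c : List (PStar n)) : Prop :=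
  ∀ x y z : PStar n, [x, y, z] <:+: c → TopAscent x y z

/-- The number of inversions of a permutation. -/
def numInv {n : ℕ} (π : Equiv.Perm (Fin n)) : ℕ :=
  (Finset.univ.filter (fun p : Fin n × Fin n => p.1 < p.2 ∧ π p.2 < π p.1)).card

/-- One step of the Bruhat order: left multiplication by a transposition raising `inv` by one. -/
def BruhatStep {n : ℕ} (u v : Equiv.Perm (Fin n)) : Prop :=
  (∃ a b : Fin n, a ≠ b ∧ v = Equiv.swap a b * u) ∧ numInv v = numInv u + 1

/-- The Bruhat order on `S_n`. -/
def BruhatLE {n : ℕ} : Equiv.Perm (Fin n) → Equiv.Perm (Fin n) → Prop :=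
  Relation.ReflTransGen BruhatStep

/-- The set of second endpoints of wires of `σ`. -/
def secondEnds {n : ℕ} (σ : WDperm n) : Finset (Fin (2 * n)) :=
  Finset.univ.filter (fun b => σ b < b)

/-- The wire name at the `t`-th (0-indexed) second endpoint. -/
def piVal {n : ℕ} (σ : WDperm n) (t : ℕ) : ℕ :=
  (((secondEnds σ).sort (· ≤ ·))[t]?).elim 0 (word σ)

open Classical in
/-- The permutation `π(σ) ∈ S_n` reading the wire names at the second endpoints of `σ` in
increasing order of position. -/
noncomputable def piPerm {n : ℕ} (σ : WDperm n) : Equiv.Perm (Fin n) :=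
  if h : Function.Bijective (fun t : Fin n =>
      if ht : piVal σ (t : ℕ) < n then (⟨piVal σ (t : ℕ), ht⟩ : Fin n) else t)
  then Equiv.ofBijective _ h else 1

/-- Apply to the crossing at `(a, c)` the nesting (`nest = true`) or disjoint (`nest = false`)
uncrossing. -/
def uncrossAt {n : ℕ} (σ : WDperm n) (a c : Fin (2 * n)) (nest : Bool) : WDperm n :=
  if nest then nestU σ a c else disjU σ a c

/-!
A nesting uncrossing keeps the start set, while a disjoint uncrossing of `a < c < σ a < σ c`
trades the first endpoint `c` for the larger position `σ a`, so it strictly increases the sum of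
the first endpoints. Hence every diagram in `[σ, τ]` has the start set `S = S(σ) = S(τ)`, and all
covers inside the interval are nesting uncrossings.

A diagram with start set `S` is determined by `π`: the `t`-th second endpoint `b_t` is joined to the
`π(t)`-th first endpoint `a_{π(t)}`. The permutations arising this way are those with
`a_{π(t)} < b_t` for all `t`, a condition inherited by everything below in the Bruhat order. The
nesting uncrossing of the wires ending at `b_t < b_s` replaces `π` by `π * (t s)`. Nested pairs of
wires are the inversions of `π`, and the number of disjoint pairs depends only on `S`, so
`c(D) + inv(π(D))` is constant on diagrams with start set `S`. Thus covers of `P_n^*` inside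
the fiber are exactly Bruhat covers, and Bruhat chains lift to chains of nesting uncrossings.
-/

namespace Finset

variable {α : Type*} [LinearOrder α] {k : ℕ}

theorem card_filter_lt_orderEmbOfFin (s : Finset α) (h : s.card = k) (i : Fin k) :
    #{x ∈ s | x < s.orderEmbOfFin h i} = i := by
  have : {x ∈ s | x < s.orderEmbOfFin h i} = (Iio i).map (s.orderEmbOfFin h).toEmbedding := by
    ext x
    simp only [mem_filter, mem_map, mem_Iio, RelEmbedding.coe_toEmbedding]
    constructor
    · rintro ⟨hx, hlt⟩
      obtain ⟨j, rfl⟩ : x ∈ Set.range (s.orderEmbOfFin h) := by simpa using hx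
      exact ⟨j, (s.orderEmbOfFin h).lt_iff_lt.mp hlt, rfl⟩
    · rintro ⟨j, hj, rfl⟩
      exact ⟨orderEmbOfFin_mem s h j, (s.orderEmbOfFin h).lt_iff_lt.mpr hj⟩
  rw [this, card_map, Fin.card_Iio]

theorem orderEmbOfFin_congr {s t : Finset α} (hst : s = t) (hs : s.card = k) (ht : t.card = k) :
    s.orderEmbOfFin hs = t.orderEmbOfFin ht := by
  subst hst; rfl

end Finset

open Finset Equiv Relation

namespace Equiv.Perm

variable {n : ℕ}

theorem numInv_lt_numInv_mul_swap {w : Perm (Fin n)} {t s : Fin n} (hts : t < s)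
    (hw : w t < w s) : numInv w < numInv (w * swap t s) := by
  let inv (u : Perm (Fin n)) : Finset (Fin n × Fin n) := {p | p.1 < p.2 ∧ u p.2 < u p.1}
  have hnotin : (t, s) ∉ inv w := by simp [inv, hw.le]
  -- `φ` relabels an inversion of `w` by the positions its two values occupy in `w * swap t s`,
  -- keeping it in place when that relabelling would reverse the pair.
  let φ : Fin n × Fin n → Fin n × Fin n := fun p =>
    if swap t s p.1 < swap t s p.2 then (swap t s p.1, swap t s p.2) else p
  have hmaps : ∀ p ∈ insert (t, s) (inv w), φ p ∈ inv (w * swap t s) := by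
    rintro ⟨i, j⟩ hp
    simp only [inv, mem_insert, mem_filter, mem_univ, true_and, φ, Perm.mul_apply,
      swap_apply_def] at hp ⊢
    split_ifs <;> grind
  have hφφ : ∀ p ∈ insert (t, s) (inv w), φ (φ p) = p := by
    rintro ⟨i, j⟩ hp
    have hij : i < j := by simp only [inv, mem_insert, mem_filter] at hp; grind
    by_cases h : swap t s i < swap t s j <;> simp [φ, h, hij]
  have hinj : Set.InjOn φ (insert (t, s) (inv w) : Finset _) := fun p hp p' hp' h => by
    rw [← hφφ p hp, h, hφφ p' hp']
  have := card_le_card_of_injOn φ hmaps hinj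
  rwa [card_insert_of_notMem hnotin] at this

end Equiv.Perm

theorem BruhatStep.exists_mul_swap {n : ℕ} {u v : Perm (Fin n)} (h : BruhatStep u v) :
    ∃ t s, t < s ∧ u t < u s ∧ v = u * swap t s := by
  obtain ⟨⟨x, y, hxy, rfl⟩, hinv⟩ := h
  have hv : swap x y * u = u * swap (u.symm x) (u.symm y) := by
    rw [mul_swap_eq_swap_mul, u.apply_symm_apply, u.apply_symm_apply]
  rw [hv] at hinv ⊢
  clear hv
  wlog hlt : u.symm x < u.symm y generalizing x y
  · obtain ⟨t, s, h⟩ := this y x hxy.symm (by rwa [swap_comm])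
      (lt_of_le_of_ne (not_lt.mp hlt) (u.symm.injective.ne hxy.symm))
    exact ⟨t, s, by rwa [swap_comm] at h⟩
  refine ⟨_, _, hlt, ?_, rfl⟩
  by_contra hge
  have hlt' : (u * swap (u.symm x) (u.symm y)) (u.symm x) <
      (u * swap (u.symm x) (u.symm y)) (u.symm y) := by
    simp only [Perm.mul_apply, swap_apply_left, swap_apply_right]
    exact lt_of_le_of_ne (not_lt.mp hge) (u.injective.ne (u.symm.injective.ne hxy.symm))
  have := Perm.numInv_lt_numInv_mul_swap hlt hlt'
  rw [mul_assoc, swap_mul_self, mul_one] at this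
  omega

abbrev WireDiagram (n : ℕ) := {σ : WDperm n // IsWD σ}

namespace WireDiagram

variable {n : ℕ} {D E : WDperm n}

@[simp] theorem mem_startSet {x : Fin (2 * n)} : x ∈ startSet D ↔ x < D x := by
  simp [startSet]

@[simp] theorem mem_secondEnds {x : Fin (2 * n)} : x ∈ secondEnds D ↔ D x < x := by
  simp [secondEnds]

theorem secondEnds_eq_compl (hD : IsWD D) : secondEnds D = (startSet D)ᶜ := by
  ext x
  simpa using ⟨fun h => h.le, fun h => lt_of_le_of_ne h (hD.2 x)⟩

theorem card_startSet (hD : IsWD D) : #(startSet D) = n := by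
  have hmap : (startSet D).map D.toEmbedding = secondEnds D := by
    ext y
    simp only [mem_map, mem_startSet, mem_secondEnds, coe_toEmbedding]
    exact ⟨by rintro ⟨x, hx, rfl⟩; rwa [hD.1], fun hy => ⟨D y, by rwa [hD.1], hD.1 y⟩⟩
  have hcard := card_add_card_compl (startSet D)
  rw [← secondEnds_eq_compl hD, ← hmap, card_map, Fintype.card_fin] at hcard
  omega

theorem card_secondEnds (hD : IsWD D) : #(secondEnds D) = n := by
  have hcard := card_add_card_compl (startSet D)
  rw [← secondEnds_eq_compl hD, card_startSet hD, Fintype.card_fin] at hcard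
  omega

def firstEnd (hD : IsWD D) : Fin n ↪o Fin (2 * n) :=
  (startSet D).orderEmbOfFin (card_startSet hD)

def secondEnd (hD : IsWD D) : Fin n ↪o Fin (2 * n) :=
  (secondEnds D).orderEmbOfFin (card_secondEnds hD)

theorem firstEnd_congr (hD : IsWD D) (hE : IsWD E) (h : startSet D = startSet E) :
    firstEnd hD = firstEnd hE :=
  orderEmbOfFin_congr h _ _

theorem secondEnd_congr (hD : IsWD D) (hE : IsWD E) (h : startSet D = startSet E) :
    secondEnd hD = secondEnd hE :=
  orderEmbOfFin_congr (by rw [secondEnds_eq_compl hD, secondEnds_eq_compl hE, h]) _ _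

theorem apply_secondEnd_lt (hD : IsWD D) (t : Fin n) : D (secondEnd hD t) < secondEnd hD t :=
  mem_secondEnds.mp (orderEmbOfFin_mem _ _ t)

theorem exists_firstEnd_eq (hD : IsWD D) {x : Fin (2 * n)} (hx : x < D x) :
    ∃ t, firstEnd hD t = x :=
  Set.mem_range.mp (by rw [firstEnd, range_orderEmbOfFin]; simpa using hx)

theorem exists_secondEnd_eq (hD : IsWD D) {x : Fin (2 * n)} (hx : D x < x) :
    ∃ t, secondEnd hD t = x :=
  Set.mem_range.mp (by rw [secondEnd, range_orderEmbOfFin]; simpa using hx)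

theorem firstEnd_piPerm (hD : IsWD D) (t : Fin n) :
    firstEnd hD (piPerm D t) = D (secondEnd hD t) := by
  choose g hg using fun t => exists_firstEnd_eq hD (x := D (secondEnd hD t))
    (by rw [hD.1]; exact apply_secondEnd_lt hD t)
  have hpiVal : ∀ t : Fin n, piVal D t = g t := fun t => by
    have hlen : (t : ℕ) < ((secondEnds D).sort (· ≤ ·)).length := by
      rw [length_sort, card_secondEnds hD]; exact t.2
    rw [piVal, List.getElem?_eq_getElem hlen, Option.elim_some]
    change word D (secondEnd hD t) = g t
    have hfe : (startSet D).orderEmbOfFin (card_startSet hD) (g t) = D (secondEnd hD t) := hg t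
    rw [← card_filter_lt_orderEmbOfFin (startSet D) (card_startSet hD) (g t), hfe, word,
      min_eq_right (apply_secondEnd_lt hD t).le, startSet, filter_filter]
  have hfun : (fun t : Fin n => if ht : piVal D t < n then (⟨piVal D t, ht⟩ : Fin n) else t) = g :=
    funext fun t => by rw [dif_pos (by rw [hpiVal]; exact (g t).2)]; exact Fin.ext (hpiVal t)
  have hinj : Function.Injective g := fun t s hts => by
    have := hg t; rw [hts, hg s] at this
    exact (secondEnd hD).injective (D.injective this).symm
  have hbij := hfun ▸ hinj.bijective_of_finite
  rw [piPerm, dif_pos hbij, Equiv.ofBijective_apply, congrFun hfun t, hg]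

theorem eq_of_piPerm_eq (hD : IsWD D) (hE : IsWD E) (hS : startSet D = startSet E)
    (hπ : piPerm D = piPerm E) : D = E := by
  have hsecond : ∀ t, D (secondEnd hD t) = E (secondEnd hD t) := fun t => by
    rw [← firstEnd_piPerm, hπ, firstEnd_congr hD hE hS, secondEnd_congr hD hE hS, firstEnd_piPerm]
  refine Equiv.ext fun x => ?_
  rcases (hD.2 x).lt_or_gt with hx | hx
  · obtain ⟨t, rfl⟩ := exists_secondEnd_eq hD hx
    rw [hsecond]
  · obtain ⟨t, ht⟩ := exists_secondEnd_eq hD (x := D x) (by rwa [hD.1])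
    have hx' := hsecond t
    rw [ht, hD.1] at hx'
    calc D x = E (E (D x)) := (hE.1 _).symm
      _ = E x := by rw [← hx']

theorem piPerm_eq_mul_of_apply_secondEnd (hD : IsWD D) (hE : IsWD E)
    (hS : startSet E = startSet D) (ρ : Perm (Fin n))
    (h : ∀ t, E (secondEnd hD t) = D (secondEnd hD (ρ t))) : piPerm E = piPerm D * ρ :=
  Equiv.ext fun t => (firstEnd hD).injective <| by
    rw [Perm.mul_apply, firstEnd_piPerm, ← h, ← firstEnd_congr hE hD hS, firstEnd_piPerm,
      secondEnd_congr hE hD hS]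

theorem numInv_piPerm (hD : IsWD D) :
    numInv (piPerm D) = #{p : Fin (2 * n) × Fin (2 * n) |
      p.1 < D p.1 ∧ p.2 < D p.2 ∧ p.1 < p.2 ∧ D p.2 < D p.1} := by
  have hπ := firstEnd_piPerm hD
  have hend := apply_secondEnd_lt hD
  refine card_bij (fun p _ => (D (secondEnd hD p.2), D (secondEnd hD p.1))) ?_ ?_ ?_
  · rintro ⟨s, t⟩ hst
    simp only [mem_filter, mem_univ, true_and, hD.1] at hst ⊢
    rw [(secondEnd hD).lt_iff_lt, ← hπ, ← hπ, (firstEnd hD).lt_iff_lt]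
    exact ⟨hπ t ▸ hend t, hπ s ▸ hend s, hst.2, hst.1⟩
  · rintro ⟨s, t⟩ - ⟨s', t'⟩ - h
    simp only [Prod.mk.injEq, D.injective.eq_iff, (secondEnd hD).injective.eq_iff] at h
    rw [h.1, h.2]
  · rintro ⟨x, y⟩ hxy
    simp only [mem_filter, mem_univ, true_and] at hxy
    obtain ⟨s, hs⟩ := exists_secondEnd_eq hD (x := D y) (by rw [hD.1]; exact hxy.2.1)
    obtain ⟨t, ht⟩ := exists_secondEnd_eq hD (x := D x) (by rw [hD.1]; exact hxy.1)
    refine ⟨(s, t), ?_, by simp [ht, hs, hD.1]⟩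
    simp only [mem_filter, mem_univ, true_and]
    rw [← (secondEnd hD).lt_iff_lt, ← (firstEnd hD).lt_iff_lt, hπ, hπ, hs, ht, hD.1, hD.1]
    exact ⟨hxy.2.2.2, hxy.2.2.1⟩

theorem ncross_add_numInv_eq_of_startSet_eq (hD : IsWD D) (hE : IsWD E)
    (hS : startSet D = startSet E) :
    ncross D + numInv (piPerm D) = ncross E + numInv (piPerm E) := by
  -- Two first endpoints `a < c` belong to crossing, nested or disjoint wires; the disjoint pairs
  -- `a < D a < c` correspond to the pairs `D a < c` of a second and a first endpoint.
  have count : ∀ {D : WDperm n}, IsWD D → ncross D + numInv (piPerm D) +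
      #{p : Fin (2 * n) × Fin (2 * n) | p.1 ∉ startSet D ∧ p.2 ∈ startSet D ∧ p.1 < p.2} =
      #{p : Fin (2 * n) × Fin (2 * n) | p.1 ∈ startSet D ∧ p.2 ∈ startSet D ∧ p.1 < p.2} := by
    intro D hD
    have hdisj : #{p : Fin (2 * n) × Fin (2 * n) | p.1 < D p.1 ∧ p.2 < D p.2 ∧ D p.1 < p.2} =
        #{p : Fin (2 * n) × Fin (2 * n) | p.1 ∉ startSet D ∧ p.2 ∈ startSet D ∧ p.1 < p.2} := by
      refine card_equiv (D.prodCongr (Equiv.refl _)) fun p => ?_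
      have := hD.1 p.1; have := hD.2 p.1
      simp only [mem_filter, mem_univ, true_and, mem_startSet, prodCongr_apply, Prod.map_fst,
        Prod.map_snd, coe_refl, id_eq]
      grind
    rw [numInv_piPerm hD, ← hdisj, ncross]
    simp only [card_filter, mem_startSet, ← sum_add_distrib]
    refine sum_congr rfl fun p _ => ?_
    have := hD.1 p.1; have := hD.1 p.2; have := hD.2 p.1; have := hD.2 p.2
    split_ifs <;> simp only [IsCrossing] at * <;> grind
  have hD' := count hD
  have hE' := count hE
  rw [hS] at hD'
  omega

section Uncrossing

variable {a c : Fin (2 * n)}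

theorem isWD_nestU (hD : IsWD D) : IsWD (nestU D a c) :=
  ⟨fun x => by simp [nestU, hD.1],
    fun x h => hD.2 (swap (D a) (D c) x) (by simpa [nestU] using congrArg (swap (D a) (D c)) h)⟩

theorem nestU_apply (hD : IsWD D) (hX : IsCrossing D a c) (x : Fin (2 * n)) :
    nestU D a c x = if x = a then D c else if x = c then D a else
      if x = D a then c else if x = D c then a else D x := by
  obtain ⟨h1, h2, h3⟩ := hX
  have := hD.1 a; have := hD.1 c; have := hD.1 x
  simp only [nestU, Perm.mul_apply, swap_apply_def]
  split_ifs <;> grind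

theorem disjU_apply (hD : IsWD D) (hX : IsCrossing D a c) (x : Fin (2 * n)) :
    disjU D a c x = if x = a then c else if x = c then a else
      if x = D a then D c else if x = D c then D a else D x := by
  obtain ⟨h1, h2, h3⟩ := hX
  have := hD.1 a; have := hD.1 c; have := hD.1 x
  simp only [disjU, Perm.mul_apply, swap_apply_def]
  split_ifs <;> grind

theorem startSet_nestU (hD : IsWD D) (hX : IsCrossing D a c) :
    startSet (nestU D a c) = startSet D := by
  ext x
  simp only [mem_startSet, nestU_apply hD hX]
  obtain ⟨h1, h2, h3⟩ := hX
  have := hD.1 a; have := hD.1 c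
  split_ifs <;> grind

theorem startSet_disjU (hD : IsWD D) (hX : IsCrossing D a c) :
    startSet (disjU D a c) = insert (D a) ((startSet D).erase c) := by
  ext x
  simp only [mem_startSet, mem_insert, mem_erase, disjU_apply hD hX]
  obtain ⟨h1, h2, h3⟩ := hX
  have := hD.1 a; have := hD.1 c
  split_ifs <;> grind

theorem piPerm_nestU (hD : IsWD D) (hX : IsCrossing D a c) {t s : Fin n}
    (ht : secondEnd hD t = D a) (hs : secondEnd hD s = D c) :
    piPerm (nestU D a c) = piPerm D * swap t s := by
  refine piPerm_eq_mul_of_apply_secondEnd hD (isWD_nestU hD)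
    (startSet_nestU hD hX) _ fun u => ?_
  have := apply_secondEnd_lt hD u
  have := (secondEnd hD).injective.eq_iff (a := u) (b := t)
  have := (secondEnd hD).injective.eq_iff (a := u) (b := s)
  obtain ⟨h1, h2, h3⟩ := hX
  have := hD.1 a; have := hD.1 c
  rw [nestU_apply hD ⟨h1, h2, h3⟩, swap_apply_def]
  split_ifs <;> grind

end Uncrossing

def startSum (D : WDperm n) : ℕ := ∑ x ∈ startSet D, (x : ℕ)

theorem startSum_lt_disjU {a c : Fin (2 * n)} (hD : IsWD D) (hX : IsCrossing D a c) :
    startSum D < startSum (disjU D a c) := by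
  have hc : c ∈ startSet D := mem_startSet.mpr (hX.2.1.trans hX.2.2)
  have hb : D a ∉ (startSet D).erase c := fun h => by
    have := mem_startSet.mp (mem_of_mem_erase h)
    rw [hD.1] at this
    exact lt_asymm this (hX.1.trans hX.2.1)
  rw [startSum, startSum, startSet_disjU hD hX, sum_insert hb, ← add_sum_erase _ _ hc]
  have : (c : ℕ) < D a := hX.2.1
  omega

def NestCov (x y : WireDiagram n) : Prop := IsNestStep x.1 y.1 ∧ ncross y.1 + 1 = ncross x.1

namespace NestCov

variable {x y : WireDiagram n}

theorem cov (h : NestCov x y) : Cov (some x) (some y) := ⟨Or.inl h.1, h.2⟩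

theorem startSet_eq (h : NestCov x y) : startSet x.1 = startSet y.1 := by
  obtain ⟨⟨a, c, hX, hy⟩, -⟩ := h
  rw [hy, startSet_nestU x.2 hX]

theorem bruhatStep (h : NestCov x y) : BruhatStep (piPerm x.1) (piPerm y.1) := by
  obtain ⟨⟨a, c, hX, hy⟩, hcross⟩ := h
  have hD := x.2
  obtain ⟨t, ht⟩ := exists_secondEnd_eq hD (x := x.1 a) (by rw [hD.1]; exact hX.1.trans hX.2.1)
  obtain ⟨s, hs⟩ := exists_secondEnd_eq hD (x := x.1 c) (by rw [hD.1]; exact hX.2.1.trans hX.2.2)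
  have hts : t ≠ s := by
    rintro rfl
    exact hX.1.ne (x.1.injective (ht.symm.trans hs))
  have hinv := ncross_add_numInv_eq_of_startSet_eq hD y.2 (hy ▸ (startSet_nestU hD hX).symm)
  refine ⟨⟨_, _, (piPerm x.1).injective.ne hts, ?_⟩, by omega⟩
  rw [hy, piPerm_nestU hD hX ht hs, mul_swap_eq_swap_mul]

end NestCov

theorem startSet_eq_of_reflTransGen {x y : WireDiagram n} (h : ReflTransGen NestCov x y) :
    startSet x.1 = startSet y.1 := by
  induction h with
  | refl => rfl
  | tail _ hyz ih => exact ih.trans hyz.startSet_eq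

theorem reflTransGen_cov_of_ple {x y : WireDiagram n} (h : ple (some x) (some y)) :
    ReflTransGen (fun u v : WireDiagram n => Cov (some u) (some v)) x y := by
  suffices ∀ b, ple (some x) b → ∀ y, b = some y →
      ReflTransGen (fun u v : WireDiagram n => Cov (some u) (some v)) x y from this _ h y rfl
  intro b hb
  induction hb with
  | refl => rintro y ⟨⟩; rfl
  | @tail b _ _ hcov ih =>
    rintro y rfl
    cases b with
    | none => exact hcov.elim
    | some z => exact (ih z rfl).tail hcov

theorem startSum_lt_or_reflTransGen_of_ple {x y : WireDiagram n} (h : ple (some x) (some y)) :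
    startSum x.1 < startSum y.1 ∨ ReflTransGen NestCov x y := by
  have hc := reflTransGen_cov_of_ple h
  clear h
  induction hc with
  | refl => exact .inr .refl
  | @tail z w _ hcov ih =>
    obtain ⟨hstep | ⟨a, c, hX, hw⟩, hcross⟩ := hcov
    · have hzw : NestCov z w := ⟨hstep, hcross⟩
      have hsum : startSum z.1 = startSum w.1 := by rw [startSum, hzw.startSet_eq, startSum]
      exact ih.imp (·.trans_eq hsum) (·.tail hzw)
    · have hlt : startSum z.1 < startSum w.1 := hw ▸ startSum_lt_disjU z.2 hX
      refine .inl (ih.elim (·.trans hlt) fun hxz => ?_)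
      rwa [startSum, startSet_eq_of_reflTransGen hxz]

theorem startSum_le_of_ple {x y : WireDiagram n} (h : ple (some x) (some y)) :
    startSum x.1 ≤ startSum y.1 := by
  rcases startSum_lt_or_reflTransGen_of_ple h with hlt | hxy
  · exact hlt.le
  · rw [startSum, startSet_eq_of_reflTransGen hxy, startSum]

theorem reflTransGen_of_ple_of_startSum_le {x y : WireDiagram n} (h : ple (some x) (some y))
    (hsum : startSum y.1 ≤ startSum x.1) : ReflTransGen NestCov x y :=
  (startSum_lt_or_reflTransGen_of_ple h).resolve_left hsum.not_gt

def Feasible (hD : IsWD D) (p : Perm (Fin n)) : Prop :=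
  ∀ t, firstEnd hD (p t) < secondEnd hD t

theorem feasible_piPerm (hD : IsWD D) : Feasible hD (piPerm D) :=
  fun t => (firstEnd_piPerm hD t) ▸ apply_secondEnd_lt hD t

theorem feasible_congr (hD : IsWD D) (hE : IsWD E) (hS : startSet D = startSet E) :
    Feasible hD = Feasible hE := by
  unfold Feasible
  rw [firstEnd_congr hD hE hS, secondEnd_congr hD hE hS]

theorem Feasible.of_bruhatStep {hD : IsWD D} {u v : Perm (Fin n)} (h : BruhatStep u v)
    (hv : Feasible hD v) : Feasible hD u := by
  obtain ⟨t, s, hts, hu, rfl⟩ := h.exists_mul_swap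
  intro k
  have hk := hv k
  have ht := hv t
  have h1 := (firstEnd hD).lt_iff_lt.mpr hu
  have h2 := (secondEnd hD).lt_iff_lt.mpr hts
  simp only [Perm.mul_apply, swap_apply_left, swap_apply_def] at hk ht
  split_ifs at hk <;> grind

theorem Feasible.of_bruhatLE {hD : IsWD D} {u v : Perm (Fin n)} (h : BruhatLE u v)
    (hv : Feasible hD v) : Feasible hD u := by
  induction h using ReflTransGen.head_induction_on with
  | refl => exact hv
  | head hstep _ ih => exact ih.of_bruhatStep hstep

theorem exists_nestCov_of_bruhatStep (x : WireDiagram n) {q : Perm (Fin n)}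
    (h : BruhatStep (piPerm x.1) q) (hq : Feasible x.2 q) :
    ∃ y, NestCov x y ∧ piPerm y.1 = q := by
  obtain ⟨D, hD⟩ := x
  dsimp only at h hq ⊢
  have hinv := h.2
  obtain ⟨t, s, hts, hlt, rfl⟩ := h.exists_mul_swap
  have hπ := firstEnd_piPerm hD
  have hX : IsCrossing D (D (secondEnd hD t)) (D (secondEnd hD s)) := by
    refine ⟨?_, ?_, ?_⟩
    · rw [← hπ, ← hπ]; exact (firstEnd hD).lt_iff_lt.mpr hlt
    · simpa [hπ, hD.1] using hq t
    · simpa [hD.1] using hts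
  refine ⟨⟨_, isWD_nestU hD⟩, ⟨⟨_, _, hX, rfl⟩, ?_⟩, piPerm_nestU hD hX (hD.1 _).symm (hD.1 _).symm⟩
  have := ncross_add_numInv_eq_of_startSet_eq hD (isWD_nestU hD) (startSet_nestU hD hX).symm
  rw [piPerm_nestU hD hX (hD.1 _).symm (hD.1 _).symm] at this
  dsimp only
  omega

theorem exists_reflTransGen_of_bruhatLE (x : WireDiagram n) {p : Perm (Fin n)}
    (h : BruhatLE (piPerm x.1) p) (hp : Feasible x.2 p) :
    ∃ y, ReflTransGen NestCov x y ∧ piPerm y.1 = p := by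
  induction h with
  | refl => exact ⟨x, .refl, rfl⟩
  | tail _ hstep ih =>
    obtain ⟨y, hxy, hπ⟩ := ih (hp.of_bruhatStep hstep)
    obtain ⟨z, hyz, hπz⟩ := exists_nestCov_of_bruhatStep y (hπ ▸ hstep)
      (by rwa [← feasible_congr x.2 y.2 (startSet_eq_of_reflTransGen hxy)])
    exact ⟨z, hxy.tail hyz, hπz⟩

theorem ple_iff_bruhatLE {x y : WireDiagram n} (hS : startSet x.1 = startSet y.1) :
    ple (some x) (some y) ↔ BruhatLE (piPerm x.1) (piPerm y.1) := by
  constructor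
  · intro h
    have hsum : startSum y.1 ≤ startSum x.1 := by rw [startSum, startSum, hS]
    exact (reflTransGen_of_ple_of_startSum_le h hsum).lift (fun z : WireDiagram n => piPerm z.1)
      fun _ _ => NestCov.bruhatStep
  · intro h
    obtain ⟨z, hxz, hπ⟩ := exists_reflTransGen_of_bruhatLE x h
      (by rw [feasible_congr x.2 y.2 hS]; exact feasible_piPerm y.2)
    have hzy : z = y := Subtype.ext <|
      eq_of_piPerm_eq z.2 y.2 ((startSet_eq_of_reflTransGen hxz).symm.trans hS) hπ
    exact hzy ▸ hxz.lift some fun _ _ => NestCov.cov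

theorem startSet_eq_of_ple_of_ple {x y z : WireDiagram n} (hxy : ple (some x) (some y))
    (hyz : ple (some y) (some z)) (hS : startSet x.1 = startSet z.1) :
    startSet x.1 = startSet y.1 := by
  have hsum : startSum y.1 ≤ startSum x.1 :=
    (startSum_le_of_ple hyz).trans_eq (by rw [startSum, startSum, hS])
  exact startSet_eq_of_reflTransGen (reflTransGen_of_ple_of_startSum_le hxy hsum)

end WireDiagram

open WireDiagram

theorem interval_iso_bruhat_general (n : ℕ) (σ τ : {σ : WDperm n // IsWD σ})
    (hS : startSet σ.1 = startSet τ.1) :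
    (∀ D : {σ : WDperm n // IsWD σ}, ple (some σ) (some D) → ple (some D) (some τ) →
        BruhatLE (piPerm σ.1) (piPerm D.1) ∧ BruhatLE (piPerm D.1) (piPerm τ.1)) ∧
    (∀ D D' : {σ : WDperm n // IsWD σ},
        ple (some σ) (some D) → ple (some D) (some τ) →
        ple (some σ) (some D') → ple (some D') (some τ) →
        ((ple (some D) (some D') ↔ BruhatLE (piPerm D.1) (piPerm D'.1)) ∧
          (piPerm D.1 = piPerm D'.1 → D = D'))) ∧
    (∀ p : Equiv.Perm (Fin n), BruhatLE (piPerm σ.1) p → BruhatLE p (piPerm τ.1) →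
        ∃ D : {σ : WDperm n // IsWD σ}, ple (some σ) (some D) ∧ ple (some D) (some τ) ∧
          piPerm D.1 = p) := by
  have hstart : ∀ D : WireDiagram n, ple (some σ) (some D) → ple (some D) (some τ) →
      startSet σ.1 = startSet D.1 := fun D h1 h2 => startSet_eq_of_ple_of_ple h1 h2 hS
  refine ⟨fun D h1 h2 => ⟨?_, ?_⟩, fun D D' h1 h2 h1' h2' => ⟨?_, ?_⟩, fun p hp1 hp2 => ?_⟩
  · exact (ple_iff_bruhatLE (hstart D h1 h2)).mp h1
  · exact (ple_iff_bruhatLE ((hstart D h1 h2).symm.trans hS)).mp h2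
  · exact ple_iff_bruhatLE ((hstart D h1 h2).symm.trans (hstart D' h1' h2'))
  · exact fun hπ => Subtype.ext <|
      eq_of_piPerm_eq D.2 D'.2 ((hstart D h1 h2).symm.trans (hstart D' h1' h2')) hπ
  · have hp : Feasible σ.2 p :=
      Feasible.of_bruhatLE hp2 (feasible_congr σ.2 τ.2 hS ▸ feasible_piPerm τ.2)
    obtain ⟨D, hσD, hπ⟩ := exists_reflTransGen_of_bruhatLE σ hp1 hp
    refine ⟨D, hσD.lift some fun _ _ => NestCov.cov, ?_, hπ⟩
    exact (ple_iff_bruhatLE ((startSet_eq_of_reflTransGen hσD).symm.trans hS)).mpr (hπ ▸ hp2)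

/-- If `σ ≤ τ` in `P_n^*` with `S(σ) = S(τ)`, then `D ↦ π(D)` is an order isomorphism from the
interval `[σ, τ]` of `P_n^*` onto the interval `[π(σ), π(τ)]` of the Bruhat order on `S_n`:
it maps into the Bruhat interval, it is order preserving and reflecting, injective, and
surjective onto the Bruhat interval. -/
theorem interval_iso_bruhat (n : ℕ) (hn : 2 ≤ n) (σ τ : {σ : WDperm n // IsWD σ})
    (hle : ple (some σ) (some τ)) (hS : startSet σ.1 = startSet τ.1) :
    (∀ D : {σ : WDperm n // IsWD σ}, ple (some σ) (some D) → ple (some D) (some τ) →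
        BruhatLE (piPerm σ.1) (piPerm D.1) ∧ BruhatLE (piPerm D.1) (piPerm τ.1)) ∧
    (∀ D D' : {σ : WDperm n // IsWD σ},
        ple (some σ) (some D) → ple (some D) (some τ) →
        ple (some σ) (some D') → ple (some D') (some τ) →
        ((ple (some D) (some D') ↔ BruhatLE (piPerm D.1) (piPerm D'.1)) ∧
          (piPerm D.1 = piPerm D'.1 → D = D'))) ∧
    (∀ p : Equiv.Perm (Fin n), BruhatLE (piPerm σ.1) p → BruhatLE p (piPerm τ.1) →
        ∃ D : {σ : WDperm n // IsWD σ}, ple (some σ) (some D) ∧ ple (some D) (some τ) ∧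
          piPerm D.1 = p) :=
  interval_iso_bruhat_general n σ τ hS
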